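/- Let ρ : ℝ² → ℝ be smooth, compactly supported, with ∫ρ = 1, and for δ ∈ (0,1] set ρ_δ^{(2)}(t,x) = δ^{-1}(ρ⋆ρ)(t, δ^{-1}x). Then ∫ P(z) ρ_δ^{(2)}(z) dz converges, as δ → 0, to ∫_0^∞ ρ̄(t)/√(4πt) dt, where ρ̄(t) = ∫_ℝ (ρ⋆ρ)(t,x) dx and P is the heat kernel on ℝ vanishing for t ≤ 0. -/

import Mathlib

open MeasureTheory Real Filter
open scoped NNReal ENNReal Convolution

/-- The heat kernel on `ℝ` as a space-time kernel, vanishing for `t ≤ 0`. -/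
noncomputable def heatKernelST (z : ℝ × ℝ) : ℝ :=
  if 0 < z.1 then (Real.sqrt (4 * Real.pi * z.1))⁻¹ * Real.exp (-(z.2 ^ 2) / (4 * z.1)) else 0

/-- Space-time convolution on `ℝ²`. -/
noncomputable def convST (f g : ℝ × ℝ → ℝ) (z : ℝ × ℝ) : ℝ := ∫ w : ℝ × ℝ, f w * g (z - w)

lemma measurable_heatKernelST : Measurable heatKernelST := by
  unfold heatKernelST
  refine Measurable.ite (measurableSet_lt measurable_const measurable_fst) ?_ measurable_const
  fun_prop

lemma heatKernelST_nonneg (z : ℝ × ℝ) : 0 ≤ heatKernelST z := by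
  unfold heatKernelST
  split
  · positivity
  · exact le_refl 0

lemma heatKernelST_of_nonpos {t : ℝ} (ht : ¬ 0 < t) (x : ℝ) : heatKernelST (t, x) = 0 := by
  simp [heatKernelST, ht]

lemma heatKernelST_zero {t : ℝ} (ht : 0 < t) :
    heatKernelST (t, 0) = (Real.sqrt (4 * Real.pi * t))⁻¹ := by
  simp [heatKernelST, ht]

lemma heatKernelST_le {t : ℝ} (ht : 0 < t) (x : ℝ) :
    heatKernelST (t, x) ≤ (Real.sqrt (4 * Real.pi * t))⁻¹ := by
  rw [show heatKernelST (t, x) = (Real.sqrt (4 * Real.pi * t))⁻¹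
      * Real.exp (-(x ^ 2) / (4 * t)) from by simp [heatKernelST, ht]]
  have h1 : Real.exp (-(x ^ 2) / (4 * t)) ≤ 1 := by
    rw [Real.exp_le_one_iff]
    apply div_nonpos_of_nonpos_of_nonneg <;> [nlinarith; nlinarith]
  nlinarith [Real.sqrt_nonneg (4 * Real.pi * t), inv_nonneg.2 (Real.sqrt_nonneg (4 * Real.pi * t))]

/-- Substitution `x ↦ x/δ` in the second variable of an integral over `ℝ²`. -/
lemma integral_comp_div_snd (g : ℝ × ℝ → ℝ) {δ : ℝ} (hδ : 0 < δ) :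
    ∫ z : ℝ × ℝ, g (z.1, z.2 / δ) = δ * ∫ z : ℝ × ℝ, g z := by
  have hδ' : δ⁻¹ ≠ 0 := inv_ne_zero hδ.ne'
  let e : (ℝ × ℝ) ≃ᵐ (ℝ × ℝ) :=
    (MeasurableEquiv.refl ℝ).prodCongr (Homeomorph.mulRight₀ δ⁻¹ hδ').toMeasurableEquiv
  have hcoe : ⇑e = Prod.map id (fun x : ℝ => x * δ⁻¹) := rfl
  have he : Measure.map e (volume : Measure (ℝ × ℝ)) = ENNReal.ofReal δ • volume := by
    rw [Measure.volume_eq_prod, hcoe,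
      ← Measure.map_prod_map _ _ measurable_id (measurable_mul_const δ⁻¹),
      Measure.map_id, Real.map_volume_mul_right hδ', inv_inv, abs_of_pos hδ]
    haveI : SigmaFinite (ENNReal.ofReal δ • (volume : Measure ℝ)) := by
      rw [show (ENNReal.ofReal δ) = ((δ.toNNReal : ℝ≥0) : ℝ≥0∞) from rfl, ← ENNReal.smul_def]
      infer_instance
    refine Measure.prod_eq fun s t hs ht => ?_
    simp [Measure.prod_prod, mul_comm, mul_left_comm]
  have hfun : (fun z : ℝ × ℝ => g (z.1, z.2 / δ)) = fun z => g (e z) := by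
    funext z
    show g (z.1, z.2 / δ) = g (z.1, z.2 * δ⁻¹)
    rw [div_eq_mul_inv]
  calc ∫ z : ℝ × ℝ, g (z.1, z.2 / δ) = ∫ z : ℝ × ℝ, g (e z) := by rw [hfun]
    _ = ∫ w, g w ∂(Measure.map e volume) := (MeasureTheory.integral_map_equiv e g).symm
    _ = δ * ∫ z : ℝ × ℝ, g z := by
        rw [he, integral_smul_measure, ENNReal.toReal_ofReal hδ.le, smul_eq_mul]

lemma integrableOn_inv_sqrt_mul {R : ℝ} (hR : 0 < R) :
    IntegrableOn (fun t : ℝ => (Real.sqrt (4 * Real.pi * t))⁻¹) (Set.Ioc 0 R) := by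
  have h1 : IntegrableOn (fun t : ℝ => t ^ (-(1/2) : ℝ)) (Set.Ioc 0 R) := by
    have := intervalIntegral.intervalIntegrable_rpow' (a := 0) (b := R)
      (by norm_num : (-1 : ℝ) < -(1/2))
    rwa [intervalIntegrable_iff_integrableOn_Ioc_of_le hR.le] at this
  refine MeasureTheory.IntegrableOn.congr_fun (h1.const_mul ((Real.sqrt (4 * Real.pi))⁻¹)) ?_ measurableSet_Ioc
  intro t ht
  have ht0 : 0 < t := ht.1
  dsimp only
  rw [Real.sqrt_mul (by positivity : (0:ℝ) ≤ 4 * Real.pi) t, mul_inv,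
    Real.rpow_neg ht0.le, ← Real.sqrt_eq_rpow]

/-- Removing the spatial regularisation at fixed temporal regularisation: with
`ρ_δ⁽²⁾(t,x) = δ⁻¹ (ρ⋆ρ)(t, δ⁻¹ x)`, the constant `∫ P ρ_δ⁽²⁾` converges, as `δ → 0⁺`,
to `∫_0^∞ ρ̄(t)/√(4πt) dt`, where `ρ̄(t) = ∫ (ρ⋆ρ)(t,x) dx`. -/
theorem crho_spatial_limit (ρ : ℝ × ℝ → ℝ)
    (hsmooth : ContDiff ℝ (⊤ : ℕ∞) ρ) (hsupp : HasCompactSupport ρ)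
    (hint : ∫ z : ℝ × ℝ, ρ z = 1) :
    Tendsto
      (fun δ : ℝ => ∫ z : ℝ × ℝ, heatKernelST z * (δ⁻¹ * convST ρ ρ (z.1, z.2 / δ)))
      (nhdsWithin 0 (Set.Ioi 0))
      (nhds (∫ t in Set.Ioi (0 : ℝ),
        (∫ x : ℝ, convST ρ ρ (t, x)) / Real.sqrt (4 * Real.pi * t))) := by
  classical
  set φ : ℝ × ℝ → ℝ := convST ρ ρ with hφdef
  have hconv : φ = ρ ⋆[ContinuousLinearMap.mul ℝ ℝ, volume] ρ := rfl
  have hρc : Continuous ρ := hsmooth.continuous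
  have hφc : Continuous φ := by
    rw [hconv]; exact HasCompactSupport.continuous_convolution_right (ContinuousLinearMap.mul ℝ ℝ) hsupp hρc.locallyIntegrable hρc
  have hφs : HasCompactSupport φ := by
    rw [hconv]; exact HasCompactSupport.convolution (ContinuousLinearMap.mul ℝ ℝ) hsupp hsupp
  obtain ⟨M, hM⟩ := hφc.bounded_above_of_compact_support hφs
  have hM0 : 0 ≤ M := le_trans (norm_nonneg _) (hM 0)
  obtain ⟨R, hR0, hRsub⟩ := hφs.isBounded.subset_closedBall_lt 0 0
  have hsub : ∀ z : ℝ × ℝ, φ z ≠ 0 → |z.1| ≤ R ∧ |z.2| ≤ R := by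
    intro z hz
    have hz' : z ∈ Metric.closedBall (0 : ℝ × ℝ) R := hRsub (subset_tsupport φ hz)
    simp only [Metric.mem_closedBall, dist_zero_right, Prod.norm_def, max_le_iff,
      Real.norm_eq_abs] at hz'
    exact hz'
  set D : ℝ × ℝ → ℝ := fun z =>
    (Set.Ioc (0:ℝ) R).indicator (fun t => (Real.sqrt (4*Real.pi*t))⁻¹) z.1 *
      (Set.Icc (-R) R).indicator (fun _ => M) z.2 with hDdef
  have hD0 : ∀ z, 0 ≤ D z := fun z =>
    mul_nonneg (Set.indicator_nonneg (fun t _ => by positivity) _)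
      (Set.indicator_nonneg (fun _ _ => hM0) _)
  have hDint : Integrable D := by
    have hf : Integrable ((Set.Ioc (0:ℝ) R).indicator fun t => (Real.sqrt (4*Real.pi*t))⁻¹) := by
      rw [integrable_indicator_iff measurableSet_Ioc]
      exact integrableOn_inv_sqrt_mul hR0
    have hg : Integrable ((Set.Icc (-R) R).indicator fun _ : ℝ => M) := by
      rw [integrable_indicator_iff measurableSet_Icc]
      exact integrableOn_const measure_Icc_lt_top.ne
    have := hf.mul_prod hg
    rwa [← Measure.volume_eq_prod] at this
  set F : ℝ → ℝ × ℝ → ℝ := fun δ z => heatKernelST (z.1, δ * z.2) * φ z with hFdef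
  have hFm : ∀ δ : ℝ, AEStronglyMeasurable (F δ) volume := fun δ =>
    ((measurable_heatKernelST.comp (measurable_fst.prodMk (measurable_snd.const_mul δ))).mul
      hφc.measurable).aestronglyMeasurable
  have hFb : ∀ δ : ℝ, ∀ z : ℝ × ℝ, ‖F δ z‖ ≤ D z := by
    intro δ z
    show ‖heatKernelST (z.1, δ * z.2) * φ z‖ ≤ D z
    rw [norm_mul, Real.norm_eq_abs, Real.norm_eq_abs, abs_of_nonneg (heatKernelST_nonneg _)]
    by_cases h0 : φ z = 0
    · simpa [h0] using hD0 z
    · obtain ⟨h1, h2⟩ := hsub z h0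
      by_cases ht : 0 < z.1
      · have hD : D z = (Real.sqrt (4*Real.pi*z.1))⁻¹ * M := by
          show Set.indicator _ _ z.1 * Set.indicator _ _ z.2 = _
          rw [Set.indicator_of_mem (Set.mem_Ioc.2 ⟨ht, (abs_le.1 h1).2⟩),
            Set.indicator_of_mem (Set.mem_Icc.2 (abs_le.1 h2))]
        rw [hD]
        refine mul_le_mul (heatKernelST_le ht _) ?_ (abs_nonneg _) (by positivity)
        simpa [Real.norm_eq_abs] using hM z
      · rw [heatKernelST_of_nonpos ht, zero_mul]
        exact hD0 z
  have hFlim : ∀ z : ℝ × ℝ, Tendsto (fun δ : ℝ => F δ z) (nhdsWithin 0 (Set.Ioi 0))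
      (nhds (F 0 z)) := by
    intro z
    apply Tendsto.mul_const
    by_cases ht : 0 < z.1
    · have hek : ∀ y : ℝ, heatKernelST (z.1, y)
          = (Real.sqrt (4*Real.pi*z.1))⁻¹ * Real.exp (-(y^2)/(4*z.1)) := fun y => by
        simp [heatKernelST, ht]
      have hc : Continuous fun x : ℝ =>
          (Real.sqrt (4*Real.pi*z.1))⁻¹ * Real.exp (-(x^2)/(4*z.1)) := by fun_prop
      have h2 : Tendsto (fun δ : ℝ => δ * z.2) (nhdsWithin 0 (Set.Ioi 0)) (nhds (0 * z.2)) :=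
        ((continuous_id.mul continuous_const).tendsto 0).mono_left nhdsWithin_le_nhds
      have h3 := (hc.tendsto (0 * z.2)).comp h2
      simp only [hek]
      exact h3
    · have hek : ∀ y : ℝ, heatKernelST (z.1, y) = 0 := fun y => heatKernelST_of_nonpos ht y
      simp only [hek]
      exact tendsto_const_nhds
  have hmain : Tendsto (fun δ : ℝ => ∫ z : ℝ × ℝ, F δ z) (nhdsWithin 0 (Set.Ioi 0))
      (nhds (∫ z : ℝ × ℝ, F 0 z)) :=
    tendsto_integral_filter_of_dominated_convergence D (Eventually.of_forall hFm)
      (Eventually.of_forall fun δ => ae_of_all _ (hFb δ)) hDint (ae_of_all _ hFlim)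
  have hF0int : Integrable (F 0) := hDint.mono' (hFm 0) (ae_of_all _ (hFb 0))
  have heq : ∀ δ ∈ Set.Ioi (0:ℝ),
      (∫ z : ℝ × ℝ, heatKernelST z * (δ⁻¹ * φ (z.1, z.2 / δ))) = ∫ z : ℝ × ℝ, F δ z := by
    intro δ hδ
    have hδ0 : (0:ℝ) < δ := hδ
    have h1 : ∀ z : ℝ × ℝ, heatKernelST z * (δ⁻¹ * φ (z.1, z.2 / δ))
        = (fun w : ℝ × ℝ => heatKernelST (w.1, δ * w.2) * (δ⁻¹ * φ w)) (z.1, z.2 / δ) := by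
      intro z
      simp only
      have hz2 : δ * (z.2 / δ) = z.2 := by field_simp
      rw [hz2, Prod.mk.eta]
    calc ∫ z : ℝ × ℝ, heatKernelST z * (δ⁻¹ * φ (z.1, z.2 / δ))
        = ∫ z : ℝ × ℝ,
            (fun w : ℝ × ℝ => heatKernelST (w.1, δ * w.2) * (δ⁻¹ * φ w)) (z.1, z.2 / δ) := by
          rw [show (fun z : ℝ × ℝ => heatKernelST z * (δ⁻¹ * φ (z.1, z.2 / δ)))
            = fun z : ℝ × ℝ =>
              (fun w : ℝ × ℝ => heatKernelST (w.1, δ * w.2) * (δ⁻¹ * φ w)) (z.1, z.2 / δ)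
            from funext h1]
      _ = δ * ∫ w : ℝ × ℝ, heatKernelST (w.1, δ * w.2) * (δ⁻¹ * φ w) :=
          integral_comp_div_snd (fun w : ℝ × ℝ => heatKernelST (w.1, δ * w.2) * (δ⁻¹ * φ w)) hδ0
      _ = δ * ∫ w : ℝ × ℝ, δ⁻¹ * (heatKernelST (w.1, δ * w.2) * φ w) := by
          congr 1
          congr 1
          funext w
          ring
      _ = δ * (δ⁻¹ * ∫ w : ℝ × ℝ, heatKernelST (w.1, δ * w.2) * φ w) := by
          rw [integral_const_mul]
      _ = ∫ z : ℝ × ℝ, F δ z := by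
          rw [← mul_assoc, mul_inv_cancel₀ hδ0.ne', one_mul]
  have hF0 : (∫ z : ℝ × ℝ, F 0 z)
      = ∫ t in Set.Ioi (0:ℝ), (∫ x : ℝ, φ (t, x)) / Real.sqrt (4 * Real.pi * t) := by
    rw [Measure.volume_eq_prod] at hF0int
    have h1 : (∫ z : ℝ × ℝ, F 0 z) = ∫ t : ℝ, ∫ y : ℝ, F 0 (t, y) := by
      rw [Measure.volume_eq_prod]
      exact integral_prod _ hF0int
    rw [h1]
    have h2 : ∀ t : ℝ, (∫ y : ℝ, F 0 (t, y)) = heatKernelST (t, 0) * ∫ y : ℝ, φ (t, y) := by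
      intro t
      have h3 : ∀ y : ℝ, F 0 (t, y) = heatKernelST (t, 0) * φ (t, y) := by
        intro y
        show heatKernelST (t, 0 * y) * φ (t, y) = _
        rw [zero_mul]
      rw [show (fun y : ℝ => F 0 (t, y)) = fun y : ℝ => heatKernelST (t, 0) * φ (t, y)
        from funext h3]
      exact integral_const_mul _ _
    simp_rw [h2]
    rw [← MeasureTheory.setIntegral_eq_integral_of_forall_compl_eq_zero
      (s := Set.Ioi (0:ℝ)) (fun t ht => by
        rw [heatKernelST_of_nonpos (by simpa using ht), zero_mul])]
    refine setIntegral_congr_fun measurableSet_Ioi fun t ht => ?_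
    rw [heatKernelST_zero ht, div_eq_mul_inv, mul_comm]
  have hev : (fun δ : ℝ => ∫ z : ℝ × ℝ, F δ z)
      =ᶠ[nhdsWithin 0 (Set.Ioi 0)]
      (fun δ : ℝ => ∫ z : ℝ × ℝ, heatKernelST z * (δ⁻¹ * φ (z.1, z.2 / δ))) :=
    Filter.eventuallyEq_of_mem self_mem_nhdsWithin fun δ hδ => (heq δ hδ).symm
  rw [hF0] at hmain
  exact hmain.congr' hev
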